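/- Let g₀, g₁, g₂ ∈ ℂ[[x,y]]. Then dim_ℂ ℂ[[x,y]]/(g₀, g₁g₂) = dim_ℂ ℂ[[x,y]]/(g₀,g₁) + dim_ℂ ℂ[[x,y]]/(g₀,g₂) and dim_ℂ ℂ[[x,y]]/(g₀g₁, g₂) = dim_ℂ ℂ[[x,y]]/(g₀,g₂) + dim_ℂ ℂ[[x,y]]/(g₁,g₂), as elements of ℕ∪{∞}. -/

import Mathlib

set_option synthInstance.maxHeartbeats 400000

/-- The formal power series ring `ℂ[[x,y]]`. -/
noncomputable abbrev CXY : Type := MvPowerSeries (Fin 2) ℂ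

/-- The dimension of `ℂ[[x,y]] / I` as a `ℂ`-vector space, in `ℕ∞`. -/
noncomputable def dimCXY (I : Ideal CXY) : ℕ∞ :=
  (Module.rank ℂ (CXY ⧸ I)).toENat

/-!
Multiplication by `b` and the projection give a sequence
`0 → R/(a,c) → R/(a,bc) → R/(a,b) → 0`, exact except possibly at the left; it is exact there
as soon as `b` is a nonzerodivisor modulo `a`, and then dimensions add. If `R/(a,b)` is
infinite-dimensional both sides are `∞`. Otherwise `R/(a,b)` is Artinian, so `(a,b)` contains
powers `xⁿ, yᵐ` of two variables (they lie in the Jacobson radical); these are coprime, and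
from `bt ∈ (a)` we get `xⁿt, yᵐt ∈ (a)`, hence `t ∈ (a)`. The second identity is the first
one for `g₂, g₀, g₁`.
-/

universe u

theorem Function.Exact.rank_eq_add {R : Type*} {M N P : Type u} [Ring R] [HasRankNullity.{u} R]
    [AddCommGroup M] [AddCommGroup N] [AddCommGroup P] [Module R M] [Module R N] [Module R P]
    {f : M →ₗ[R] N} {g : N →ₗ[R] P} (hfg : Function.Exact f g) (hf : Function.Injective f)
    (hg : Function.Surjective g) :
    Module.rank R N = Module.rank R P + Module.rank R M := by
  rw [LinearMap.rank_eq_of_surjective hg, hfg.linearMap_ker_eq, rank_range_of_injective f hf]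

namespace Ideal

variable {R : Type*} [CommRing R]

theorem mem_span_singleton_of_mul_mem_of_mul_mem [NoZeroDivisors R] {p q g t : R} (hq : q ≠ 0)
    (hpq : ∀ x, q ∣ p * x → q ∣ x) (hpt : p * t ∈ span {g}) (hqt : q * t ∈ span {g}) :
    t ∈ span {g} := by
  rw [mem_span_singleton] at hpt hqt ⊢
  obtain ⟨a, ha⟩ := hpt
  obtain ⟨b, hb⟩ := hqt
  rcases eq_or_ne g 0 with rfl | hg
  · rw [zero_mul, mul_eq_zero, or_iff_right hq] at hb
    exact ⟨0, by rw [hb, mul_zero]⟩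
  have hqb : q ∣ p * b := ⟨a, mul_left_cancel₀ hg (by linear_combination q * ha - p * hb)⟩
  obtain ⟨c, rfl⟩ := hpq b hqb
  exact ⟨c, mul_left_cancel₀ hq (by linear_combination hb)⟩

theorem mul_mem_span_singleton_of_mem_span_pair {a b p t : R} (hp : p ∈ span {a, b})
    (hbt : b * t ∈ span {a}) : p * t ∈ span {a} := by
  obtain ⟨u, v, rfl⟩ := mem_span_pair.mp hp
  rw [show (u * a + v * b) * t = u * t * a + v * (b * t) by ring]
  exact add_mem (mul_mem_left _ _ (mem_span_singleton_self a)) (mul_mem_left _ _ hbt)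

theorem exists_pow_mem_of_mem_jacobson_bot {I : Ideal R} [IsArtinianRing (R ⧸ I)] {x : R}
    (hx : x ∈ (⊥ : Ideal R).jacobson) : ∃ n, x ^ n ∈ I := by
  have : Quotient.mk I x ∈ (⊥ : Ideal (R ⧸ I)).jacobson :=
    mem_jacobson_bot.mpr fun y ↦ by
      obtain ⟨z, rfl⟩ := Quotient.mk_surjective y
      simpa using (mem_jacobson_bot.mp hx z).map (Quotient.mk I)
  rw [IsArtinianRing.jacobson_eq_radical] at this
  obtain ⟨n, hn⟩ := this
  exact ⟨n, Quotient.eq_zero_iff_mem.mp (by simpa using hn)⟩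

section SpanPair

variable (a b c : R)

theorem span_pair_le_comap_mulLeft :
    span {a, c} ≤ Submodule.comap (LinearMap.mulLeft R b) (span {a, b * c}) := by
  rw [span_le, Set.insert_subset_iff, Set.singleton_subset_iff]
  exact ⟨mul_mem_left _ b (subset_span (Set.mem_insert _ _)),
    subset_span (Set.mem_insert_of_mem _ rfl)⟩

theorem span_pair_mul_le : span {a, b * c} ≤ span {a, b} := by
  rw [span_le, Set.insert_subset_iff, Set.singleton_subset_iff]
  exact ⟨subset_span (Set.mem_insert _ _),
    mul_mem_right _ _ (subset_span (Set.mem_insert_of_mem _ rfl))⟩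

noncomputable def quotSpanPairMulLeft : R ⧸ span {a, c} →ₗ[R] R ⧸ span {a, b * c} :=
  Submodule.mapQ _ _ (LinearMap.mulLeft R b) (span_pair_le_comap_mulLeft a b c)

@[simp]
theorem quotSpanPairMulLeft_mk (x : R) :
    quotSpanPairMulLeft a b c (Quotient.mk _ x) = Quotient.mk _ (b * x) :=
  rfl

theorem exact_quotSpanPairMulLeft_factor :
    Function.Exact (quotSpanPairMulLeft a b c) (Quotient.factor (span_pair_mul_le a b c)) := by
  intro y
  obtain ⟨w, rfl⟩ := Quotient.mk_surjective y
  rw [Quotient.factor_mk, Quotient.eq_zero_iff_mem]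
  constructor
  · intro hw
    obtain ⟨u, v, rfl⟩ := mem_span_pair.mp hw
    refine ⟨Quotient.mk _ v, ?_⟩
    rw [quotSpanPairMulLeft_mk, Quotient.eq]
    exact mem_span_pair.mpr ⟨-u, 0, by ring⟩
  · rintro ⟨z, hz⟩
    obtain ⟨v, rfl⟩ := Quotient.mk_surjective z
    rw [quotSpanPairMulLeft_mk, Quotient.eq] at hz
    have hbv : b * v ∈ span {a, b} :=
      mul_mem_right _ _ (subset_span (Set.mem_insert_of_mem _ rfl))
    rw [← sub_sub_cancel (b * v) w]
    exact sub_mem hbv (span_pair_mul_le a b c hz)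

theorem injective_quotSpanPairMulLeft (hb : ∀ t, b * t ∈ span {a} → t ∈ span {a}) :
    Function.Injective (quotSpanPairMulLeft a b c) := by
  refine (injective_iff_map_eq_zero _).mpr fun y hy ↦ ?_
  obtain ⟨w, rfl⟩ := Quotient.mk_surjective y
  rw [quotSpanPairMulLeft_mk, Quotient.eq_zero_iff_mem] at hy
  rw [Quotient.eq_zero_iff_mem]
  obtain ⟨u, v, huv⟩ := mem_span_pair.mp hy
  obtain ⟨d, hd⟩ := mem_span_singleton'.mp (hb (w - v * c)
    (mem_span_singleton'.mpr ⟨u, by linear_combination huv⟩))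
  exact mem_span_pair.mpr ⟨d, v, by linear_combination hd⟩

theorem rank_quotient_span_pair_mul {k : Type*} [Field k] [Algebra k R]
    (hb : ∀ t, b * t ∈ span {a} → t ∈ span {a}) :
    Module.rank k (R ⧸ span {a, b * c}) =
      Module.rank k (R ⧸ span {a, b}) + Module.rank k (R ⧸ span {a, c}) :=
  Function.Exact.rank_eq_add (f := (quotSpanPairMulLeft a b c).restrictScalars k)
    (g := (Quotient.factorₐ k (span_pair_mul_le a b c)).toLinearMap)
    (exact_quotSpanPairMulLeft_factor a b c) (injective_quotSpanPairMulLeft a b c hb)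
    (Quotient.factor_surjective (span_pair_mul_le a b c))

end SpanPair

end Ideal

namespace MvPowerSeries

open Ideal

variable {σ R : Type*}

theorem X_mem_jacobson_bot [CommRing R] (s : σ) :
    (X s : MvPowerSeries σ R) ∈ (⊥ : Ideal _).jacobson :=
  mem_jacobson_bot.mpr fun y ↦ isUnit_iff_constantCoeff.mpr (by simp)

theorem X_ne_zero [Semiring R] [Nontrivial R] (s : σ) : (X s : MvPowerSeries σ R) ≠ 0 :=
  ne_zero_of_map (f := coeff (Finsupp.single s 1)) (by simp)

theorem X_pow_dvd_of_dvd_X_pow_mul [CommSemiring R] {s t : σ} (hst : s ≠ t) {m n : ℕ}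
    {φ : MvPowerSeries σ R} (h : X t ^ m ∣ X s ^ n * φ) : X t ^ m ∣ φ := by
  classical
  rw [X_pow_dvd_iff] at h ⊢
  intro e he
  have := h (Finsupp.single s n + e) (by simpa [Finsupp.single_apply, hst] using he)
  rwa [X_pow_eq, coeff_add_monomial_mul, one_mul] at this

theorem mem_span_singleton_of_mul_mem_of_finite_quotient [Field R] [Nontrivial σ]
    {a b : MvPowerSeries σ R} [Module.Finite R (MvPowerSeries σ R ⧸ span {a, b})]
    (t : MvPowerSeries σ R) (hbt : b * t ∈ span {a}) : t ∈ span {a} := by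
  obtain ⟨s, s', hss'⟩ := exists_pair_ne σ
  have := IsArtinianRing.of_finite R (MvPowerSeries σ R ⧸ span {a, b})
  obtain ⟨n, hn⟩ := exists_pow_mem_of_mem_jacobson_bot (I := span {a, b}) (X_mem_jacobson_bot s)
  obtain ⟨m, hm⟩ := exists_pow_mem_of_mem_jacobson_bot (I := span {a, b}) (X_mem_jacobson_bot s')
  exact mem_span_singleton_of_mul_mem_of_mul_mem (pow_ne_zero m (X_ne_zero s'))
    (fun _ ↦ X_pow_dvd_of_dvd_X_pow_mul hss') (mul_mem_span_singleton_of_mem_span_pair hn hbt)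
    (mul_mem_span_singleton_of_mem_span_pair hm hbt)

theorem toENat_rank_quotient_span_pair_mul [Field R] [Nontrivial σ] (a b c : MvPowerSeries σ R) :
    (Module.rank R (MvPowerSeries σ R ⧸ span {a, b * c})).toENat =
      (Module.rank R (MvPowerSeries σ R ⧸ span {a, b})).toENat +
        (Module.rank R (MvPowerSeries σ R ⧸ span {a, c})).toENat := by
  by_cases hfin : Module.Finite R (MvPowerSeries σ R ⧸ span {a, b})
  · rw [rank_quotient_span_pair_mul a b c mem_span_singleton_of_mul_mem_of_finite_quotient,
      map_add]
  · have htop : Cardinal.aleph0 ≤ Module.rank R (MvPowerSeries σ R ⧸ span {a, b}) :=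
      not_lt.mp (mt Module.rank_lt_aleph0_iff.mp hfin)
    have hle : Module.rank R (MvPowerSeries σ R ⧸ span {a, b}) ≤
        Module.rank R (MvPowerSeries σ R ⧸ span {a, b * c}) :=
      LinearMap.rank_le_of_surjective (Quotient.factorₐ R (span_pair_mul_le a b c)).toLinearMap
        (Quotient.factor_surjective (span_pair_mul_le a b c))
    rw [Cardinal.toENat_eq_top.mpr htop, Cardinal.toENat_eq_top.mpr (htop.trans hle), top_add]

end MvPowerSeries

/-- For `g₀, g₁, g₂ ∈ ℂ[[x,y]]`:
`dim ℂ[[x,y]]/(g₀, g₁g₂) = dim ℂ[[x,y]]/(g₀,g₁) + dim ℂ[[x,y]]/(g₀,g₂)` and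
`dim ℂ[[x,y]]/(g₀g₁, g₂) = dim ℂ[[x,y]]/(g₀,g₂) + dim ℂ[[x,y]]/(g₁,g₂)`, in `ℕ∞`. -/
theorem stmt13 (g₀ g₁ g₂ : CXY) :
    dimCXY (Ideal.span {g₀, g₁ * g₂}) =
      dimCXY (Ideal.span {g₀, g₁}) + dimCXY (Ideal.span {g₀, g₂}) ∧
    dimCXY (Ideal.span {g₀ * g₁, g₂}) =
      dimCXY (Ideal.span {g₀, g₂}) + dimCXY (Ideal.span {g₁, g₂}) := by
  refine ⟨MvPowerSeries.toENat_rank_quotient_span_pair_mul g₀ g₁ g₂, ?_⟩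
  have h := MvPowerSeries.toENat_rank_quotient_span_pair_mul g₂ g₀ g₁
  rwa [Set.pair_comm g₂, Set.pair_comm g₂, Set.pair_comm g₂] at h
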